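/- With x_j = cos²((n+1-j)π/(2n+2)) for j = 1,...,n, the switch function Σₙ(x) (equal to (-1)^m on [x_m, x_{m+1}), with x₀ = 0, x_{n+1} = 1) satisfies ∫₀¹ Σₙ(x)(t) p(t) dt = 0 for every real polynomial p of degree at most n-1. -/

import Mathlib

/-!
For increasing switch points the switch function equals `(-1)^n + 2 ∑ⱼ (-1)^j 𝟙[t < xⱼ]`, so
`(k + 1) ∫₀¹ Σₙ(x)(t) tᵏ dt = (-1)^n + 2 ∑ⱼ (-1)^j xⱼ^(k+1)`: orthogonality to polynomials of
degree `< n` amounts to the alternating power-sum identities `∑ⱼ (-1)^j xⱼ^K = (-1)^(n+1) / 2`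
for `1 ≤ K ≤ n`.

For the nodes `xⱼ = cos²((n - j)π / 2N)`, `N = n + 1`, put `u = exp(imπ / 2N)`, so that
`u² = ζ^m` for the primitive `2N`-th root of unity `ζ = exp(iπ / N)` and `u^(2N) = (-1)^m`. Then
`(-1)^m (2 cos(mπ / 2N))^(2K) = u^(2N) (u + u⁻¹)^(2K)` is a combination of the `(ζ^d)^m` with
`N - K ≤ d ≤ N + K`; as `0 < d < 2N` for `K < N`, its sum over `m < 2N` vanishes. The symmetry
`m ↦ 2N - m`, with the values `1` at `m = 0` and `0` at `m = N`, folds this vanishing sum onto the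
nodes.
-/

open MeasureTheory Real

/-- The switch function with switch points `x₁ ≤ ... ≤ xₙ`, starting at `+1`:
it equals `(-1)^m` on `[x_m, x_{m+1})`. -/
noncomputable def switchFun {n : ℕ} (x : Fin n → ℝ) (t : ℝ) : ℝ :=
  (-1 : ℝ) ^ (Finset.univ.filter (fun j => x j ≤ t)).card

open Finset

theorem Finset.map_valEmbedding_eq_range_card {n : ℕ} {s : Finset (Fin n)}
    (hs : IsLowerSet (s : Set (Fin n))) : s.map Fin.valEmbedding = range #s := by
  refine eq_of_subset_of_card_le ?_ (by simp)
  intro m hm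
  obtain ⟨j, hj, rfl⟩ := Finset.mem_map.mp hm
  have hIic : Finset.Iic j ⊆ s := fun i hi =>
    Finset.mem_coe.mp (hs (Finset.mem_Iic.mp hi) (Finset.mem_coe.mpr hj))
  have hcard := Finset.card_le_card hIic
  rw [Fin.card_Iic] at hcard
  simpa using hcard

theorem one_sub_two_mul_sum_range_neg_one_pow {R : Type*} [CommRing R] (c : ℕ) :
    1 - 2 * ∑ m ∈ range c, (-1 : R) ^ m = (-1) ^ c := by
  induction c with
  | zero => simp
  | succ c ih => rw [sum_range_succ, mul_add, ← sub_sub, ih, pow_succ]; ring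

theorem switchFun_eq {n : ℕ} {x : Fin n → ℝ} (hx : Monotone x) (t : ℝ) :
    switchFun x t = (-1) ^ n + 2 * ∑ j, if t < x j then (-1) ^ (j : ℕ) else 0 := by
  set s := univ.filter (fun j => x j ≤ t)
  have hs : IsLowerSet (s : Set (Fin n)) := fun i j hji hi => by
    simp only [s, coe_filter, mem_univ, true_and, Set.mem_ofPred_eq] at hi ⊢
    exact (hx hji).trans hi
  have hsum_s : ∑ j ∈ s, (-1 : ℝ) ^ (j : ℕ) = ∑ m ∈ range #s, (-1) ^ m := by
    rw [← map_valEmbedding_eq_range_card hs, sum_map]; rfl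
  have hsum_univ : ∑ j : Fin n, (-1 : ℝ) ^ (j : ℕ) = ∑ m ∈ range n, (-1) ^ m :=
    Fin.sum_univ_eq_sum_range _ n
  have hsplit :=
    sum_filter_add_sum_filter_not univ (fun j => x j ≤ t) (fun j => (-1 : ℝ) ^ (j : ℕ))
  simp only [not_le] at hsplit
  rw [← sum_filter]
  unfold switchFun
  linear_combination (one_sub_two_mul_sum_range_neg_one_pow (R := ℝ) #s).symm
    + one_sub_two_mul_sum_range_neg_one_pow (R := ℝ) n - 2 * hsplit + 2 * hsum_s - 2 * hsum_univ

theorem intervalIntegral.integral_indicator_Iio {f : ℝ → ℝ} {a b c : ℝ} (hb : b ∈ Set.Icc a c) :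
    ∫ t in a..c, (Set.Iio b).indicator f t = ∫ t in a..b, f t := by
  rw [← integral_indicator hb]
  refine integral_congr_ae ?_
  filter_upwards [indicator_ae_eq_of_ae_eq_set (f := f) (Iio_ae_eq_Iic (μ := volume) (a := b))]
    with t ht _ using ht

theorem integral_switchFun_mul {n : ℕ} {x : Fin n → ℝ} (hx : Monotone x)
    (hx01 : ∀ j, x j ∈ Set.Icc 0 1) {g : ℝ → ℝ} (hg : IntervalIntegrable g volume 0 1) :
    ∫ t in (0 : ℝ)..1, switchFun x t * g t
      = (-1) ^ n * (∫ t in (0 : ℝ)..1, g t)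
        + 2 * ∑ j : Fin n, (-1) ^ (j : ℕ) * ∫ t in (0 : ℝ)..x j, g t := by
  have hrepr : (fun t => switchFun x t * g t) = fun t =>
      (-1) ^ n * g t + ∑ j : Fin n, 2 * (-1) ^ (j : ℕ) * (Set.Iio (x j)).indicator g t := by
    ext t
    simp only [switchFun_eq hx, Set.indicator_apply, Set.mem_Iio, mul_ite, mul_zero, add_mul,
      sum_mul, ite_mul, zero_mul, mul_sum]
  have hind : ∀ j, IntervalIntegrable ((Set.Iio (x j)).indicator g) volume 0 1 := fun j =>
    ⟨hg.1.indicator measurableSet_Iio, hg.2.indicator measurableSet_Iio⟩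
  have hsum : IntervalIntegrable (∑ j : Fin n, fun t => 2 * (-1) ^ (j : ℕ) *
      (Set.Iio (x j)).indicator g t) volume 0 1 :=
    IntervalIntegrable.sum univ fun j _ => (hind j).const_mul _
  rw [Finset.sum_fn] at hsum
  rw [hrepr, intervalIntegral.integral_add (hg.const_mul _) hsum,
    intervalIntegral.integral_finsetSum fun j _ => (hind j).const_mul _, mul_sum]
  simp only [intervalIntegral.integral_const_mul, intervalIntegral.integral_indicator_Iio (hx01 _),
    mul_assoc]

theorem Polynomial.integral_eval_eq_sum_range {p : Polynomial ℝ} {n : ℕ} (hp : p.natDegree < n)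
    (a : ℝ) : ∫ t in (0 : ℝ)..a, p.eval t = ∑ k ∈ range n, p.coeff k * a ^ (k + 1) / (k + 1) := by
  simp only [eval_eq_sum_range' hp]
  rw [intervalIntegral.integral_finsetSum fun k _ =>
    ((continuous_pow k).const_mul (p.coeff k)).intervalIntegrable 0 a]
  simp only [intervalIntegral.integral_const_mul, integral_pow, zero_pow (Nat.succ_ne_zero _),
    sub_zero, mul_div_assoc]

theorem integral_switchFun_mul_eval_eq_zero {n : ℕ} {x : Fin n → ℝ} (hx : Monotone x)
    (hx01 : ∀ j, x j ∈ Set.Icc 0 1)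
    (hpow : ∀ K, 1 ≤ K → K ≤ n → ∑ j : Fin n, (-1) ^ (j : ℕ) * x j ^ K = (-1) ^ (n + 1) / 2)
    {p : Polynomial ℝ} (hp : p.degree < n) :
    ∫ t in (0 : ℝ)..1, switchFun x t * p.eval t = 0 := by
  rcases eq_or_ne p 0 with rfl | hp0
  · simp
  have hdeg := (Polynomial.natDegree_lt_iff_degree_lt hp0).2 hp
  have hmoment : ∀ k ∈ range n, (-1) ^ n + 2 * ∑ j : Fin n, (-1) ^ (j : ℕ) * x j ^ (k + 1) = 0 :=
    fun k hk => by
      rw [hpow (k + 1) le_add_self (mem_range.mp hk), pow_succ]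
      ring
  rw [integral_switchFun_mul hx hx01 (p.continuous.intervalIntegrable 0 1)]
  calc _ = ∑ k ∈ range n, p.coeff k / (k + 1) *
        ((-1) ^ n + 2 * ∑ j : Fin n, (-1) ^ (j : ℕ) * x j ^ (k + 1)) := by
        simp only [Polynomial.integral_eval_eq_sum_range hdeg, mul_add, mul_sum, sum_add_distrib]
        rw [sum_comm]
        congr 1 <;> refine sum_congr rfl fun _ _ => ?_
        · ring
        · exact sum_congr rfl fun _ _ => by ring
    _ = 0 := sum_eq_zero fun k hk => by rw [hmoment k hk, mul_zero]

theorem IsPrimitiveRoot.geom_sum_pow_eq_zero {R : Type*} [CommRing R] [IsDomain R] {ζ : R}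
    {k d : ℕ} (hζ : IsPrimitiveRoot ζ k) (hd0 : d ≠ 0) (hdk : d < k) :
    ∑ i ∈ range k, (ζ ^ d) ^ i = 0 := by
  refine eq_zero_of_ne_zero_of_mul_left_eq_zero
    (sub_ne_zero_of_ne (hζ.pow_ne_one_of_pos_of_lt hd0 hdk).symm) ?_
  rw [mul_neg_geom_sum, ← pow_mul, mul_comm, pow_mul, hζ.pow_eq_one, one_pow, sub_self]

theorem pow_mul_add_inv_pow_eq_sum {K : Type*} [Field K] {u : K} (hu : u ≠ 0) {N k : ℕ}
    (hk : k ≤ N) :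
    u ^ (2 * N) * (u + u⁻¹) ^ (2 * k)
      = ∑ r ∈ range (2 * k + 1), (2 * k).choose r * (u ^ 2) ^ (N - k + r) := by
  have hsplit : u ^ (2 * N) = (u ^ 2) ^ (N - k) * u ^ (2 * k) := by
    rw [← pow_mul, ← pow_add]; congr 1; omega
  rw [hsplit, mul_assoc, ← mul_pow, mul_add, mul_inv_cancel₀ hu, ← sq, add_pow, mul_sum]
  refine sum_congr rfl fun r _ => ?_
  rw [one_pow, pow_add]
  ring

theorem sum_neg_one_pow_mul_cos_pow_eq_zero {N k : ℕ} (hk : k < N) :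
    ∑ m ∈ range (2 * N), (-1 : ℝ) ^ m * cos (m * π / (2 * N)) ^ (2 * k) = 0 := by
  have hN : (N : ℂ) ≠ 0 := by exact_mod_cast (by omega : N ≠ 0)
  set ζ := Complex.exp (2 * π * Complex.I / (2 * N : ℕ))
  have hζ : IsPrimitiveRoot ζ (2 * N) := Complex.isPrimitiveRoot_exp _ (by omega)
  have hterm : ∀ m : ℕ, 4 ^ k * ((-1 : ℂ) ^ m * Complex.cos (m * π / (2 * N)) ^ (2 * k))
      = ∑ r ∈ range (2 * k + 1), (2 * k).choose r * (ζ ^ (N - k + r)) ^ m := by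
    intro m
    set u := Complex.exp (m * π / (2 * N) * Complex.I)
    have hu2 : u ^ 2 = ζ ^ m := by
      rw [← Complex.exp_nat_mul, ← Complex.exp_nat_mul]
      congr 1
      push_cast
      field_simp
    have huN : u ^ (2 * N) = (-1) ^ m := by
      rw [← Complex.exp_nat_mul, ← Complex.exp_pi_mul_I, ← Complex.exp_nat_mul]
      congr 1
      push_cast
      field_simp
    have hcos : 2 * Complex.cos (m * π / (2 * N)) = u + u⁻¹ := by
      rw [Complex.two_cos, neg_mul, Complex.exp_neg]
    calc _ = u ^ (2 * N) * (2 * Complex.cos (m * π / (2 * N))) ^ (2 * k) := by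
          rw [huN, mul_pow, pow_mul (2 : ℂ) 2 k]; norm_num; ring
      _ = ∑ r ∈ range (2 * k + 1), (2 * k).choose r * (u ^ 2) ^ (N - k + r) := by
          rw [hcos, pow_mul_add_inv_pow_eq_sum (Complex.exp_ne_zero _) hk.le]
      _ = _ := by simp only [hu2, ← pow_mul, mul_comm m]
  have hsum : 4 ^ k * ∑ m ∈ range (2 * N), (-1 : ℂ) ^ m * Complex.cos (m * π / (2 * N)) ^ (2 * k)
      = 0 := by
    rw [mul_sum, sum_congr rfl fun m _ => hterm m, sum_comm]
    exact sum_eq_zero fun r hr => by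
      rw [← mul_sum, hζ.geom_sum_pow_eq_zero (by omega) (by simp at hr; omega), mul_zero]
  exact_mod_cast (mul_eq_zero.mp hsum).resolve_left (by norm_num)

theorem neg_one_pow_eq_of_add_two_mul {R : Type*} [Monoid R] [HasDistribNeg R] {a b c : ℕ}
    (h : a = b + 2 * c) : (-1 : R) ^ a = (-1) ^ b := by
  rw [h, pow_add, pow_mul, neg_one_sq, one_pow, mul_one]

theorem sum_range_neg_one_pow_mul_cos_pow {n k : ℕ} (hk0 : k ≠ 0) (hkn : k ≤ n) :
    ∑ m ∈ range n, (-1 : ℝ) ^ m * cos ((m + 1) * π / (2 * n + 2)) ^ (2 * k) = 1 / 2 := by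
  set f : ℕ → ℝ := fun m => (-1) ^ m * cos (m * π / (2 * n + 2)) ^ (2 * k)
  have hfull : ∑ m ∈ range (2 * (n + 1)), f m = 0 := by
    simpa [f, mul_add] using sum_neg_one_pow_mul_cos_pow_eq_zero (N := n + 1) (k := k) (by omega)
  have hmid : f (n + 1) = 0 := by
    have : ((n + 1 : ℕ) : ℝ) * π / (2 * n + 2) = π / 2 := by
      push_cast; field_simp
    simp only [f, this, cos_pi_div_two, zero_pow (mul_ne_zero two_ne_zero hk0), mul_zero]
  have hrefl : ∀ m ∈ range n, f (n + 1 + (m + 1)) = f (n - 1 - m + 1) := by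
    intro m hm
    have hmn : m < n := mem_range.mp hm
    have hangle : ((n + 1 + (m + 1) : ℕ) : ℝ) * π / (2 * n + 2)
        = π - ((n - 1 - m + 1 : ℕ) : ℝ) * π / (2 * n + 2) := by
      rw [show n - 1 - m + 1 = n - m by omega, Nat.cast_sub hmn.le]
      push_cast; field_simp; ring
    simp only [f, hangle, cos_pi_sub, Even.neg_pow (even_two_mul k),
      neg_one_pow_eq_of_add_two_mul (show n + 1 + (m + 1) = n - 1 - m + 1 + 2 * (m + 1) by omega)]
  have hshift : ∀ m, f (m + 1) = -((-1) ^ m * cos ((m + 1) * π / (2 * n + 2)) ^ (2 * k)) := by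
    intro m
    simp only [f, pow_succ, Nat.cast_succ]
    ring
  rw [two_mul, sum_range_add, sum_range_succ', sum_range_succ', hmid, sum_congr rfl hrefl,
    sum_range_reflect (fun m => f (m + 1))] at hfull
  simp only [hshift, sum_neg_distrib, f] at hfull
  norm_num at hfull
  linarith

theorem sum_neg_one_pow_mul_cos_sq_pow {n k : ℕ} (hk0 : k ≠ 0) (hkn : k ≤ n) :
    ∑ j : Fin n, (-1 : ℝ) ^ (j : ℕ) * (cos ((n - j) * π / (2 * n + 2)) ^ 2) ^ k
      = (-1) ^ (n + 1) / 2 := by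
  have hrev : ∀ j : Fin n, (-1 : ℝ) ^ (j.rev : ℕ) * (cos ((n - j.rev) * π / (2 * n + 2)) ^ 2) ^ k
      = (-1) ^ (n + 1) * ((-1) ^ (j : ℕ) * cos ((j + 1) * π / (2 * n + 2)) ^ (2 * k)) := by
    intro j
    have hj : (j : ℕ) + 1 ≤ n := j.isLt
    rw [← mul_assoc, ← pow_add, Fin.val_rev, Nat.cast_sub hj, ← pow_mul,
      neg_one_pow_eq_of_add_two_mul (show n + 1 + j = n - (j + 1) + 2 * (j + 1) by omega)]
    push_cast
    ring_nf
  rw [← Equiv.sum_comp Fin.revPerm]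
  simp only [Fin.revPerm_apply, hrev, ← mul_sum]
  rw [Fin.sum_univ_eq_sum_range
      (fun m => (-1 : ℝ) ^ m * cos ((m + 1) * π / (2 * n + 2)) ^ (2 * k)),
    sum_range_neg_one_pow_mul_cos_pow hk0 hkn]
  ring

theorem antitoneOn_cos_sq : AntitoneOn (fun θ => cos θ ^ 2) (Set.Icc 0 (π / 2)) :=
  fun a ha b hb hab => pow_le_pow_left₀ (cos_nonneg_of_mem_Icc ⟨by linarith [pi_pos, hb.1], hb.2⟩)
    (cos_le_cos_of_nonneg_of_le_pi ha.1 (by linarith [pi_pos, hb.2]) hab) 2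

theorem stmt_9 (n : ℕ) (p : Polynomial ℝ) (hp : p.degree < n) :
    ∫ t in (0:ℝ)..1,
      switchFun (fun j : Fin n => Real.cos (((n:ℝ) - j) * π / (2*n + 2)) ^ 2) t
        * p.eval t = 0 := by
  have hangle : ∀ j : Fin n, ((n : ℝ) - j) * π / (2 * n + 2) ∈ Set.Icc 0 (π / 2) := by
    intro j
    have hj : (j : ℝ) + 1 ≤ n := by exact_mod_cast j.isLt
    constructor
    · have : (0 : ℝ) ≤ n - j := by linarith [j.val.cast_nonneg (α := ℝ)]
      positivity
    · rw [div_le_div_iff₀ (by positivity) two_pos]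
      nlinarith [pi_pos]
  refine integral_switchFun_mul_eval_eq_zero
    (fun i j hij => antitoneOn_cos_sq (hangle j) (hangle i) ?_)
    (fun j => ⟨sq_nonneg _, cos_sq_le_one _⟩)
    (fun K hK hKn => sum_neg_one_pow_mul_cos_sq_pow (by omega) hKn) hp
  gcongr
  exact_mod_cast hij
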